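/- For every n ∈ ℕ and every real x, the q-Hermite polynomial tends to the probabilists' Hermite polynomial in the limit: lim_{q → 1⁻} H_{n,q}(x) = He_n(x), where He_n is the n-th probabilists' Hermite polynomial (the monic polynomials with generating function exp(tx − t²/2) = Σ He_n(x) t^n/n!). -/

import Mathlib

open Polynomial Finset

/-- The q-integer [n]_q = 1 + q + ... + q^(n-1). -/
noncomputable def qInt (q : ℝ) (n : ℕ) : ℝ := ∑ i ∈ Finset.range n, q ^ i

/-- The q-factorial [n]_q! = [1]_q [2]_q ... [n]_q, with [0]_q! = 1. -/
noncomputable def qFact (q : ℝ) : ℕ → ℝ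
  | 0 => 1
  | n + 1 => qFact q n * qInt q (n + 1)

/-- The q-binomial coefficient [n choose k]_q = [n]_q! / ([k]_q! [n-k]_q!). -/
noncomputable def qBinom (q : ℝ) (n k : ℕ) : ℝ := qFact q n / (qFact q k * qFact q (n - k))

/-- The q-derivative on real polynomials, determined by D_q(x^n) = [n]_q x^(n-1). -/
noncomputable def qDeriv (q : ℝ) (p : Polynomial ℝ) : Polynomial ℝ :=
  p.sum fun n a => Polynomial.C (a * qInt q n) * Polynomial.X ^ (n - 1)

/-- The q-double factorial `[2n]_q!! = [2n]_q [2n-2]_q ⋯ [2]_q`, with `[0]_q!! = 1`;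
`qEvenDFact q n` is `[2n]_q!!`. -/
noncomputable def qEvenDFact (q : ℝ) : ℕ → ℝ
  | 0 => 1
  | n + 1 => qInt q (2 * (n + 1)) * qEvenDFact q n

/-- The coefficients of the q-Hermite polynomials:
`h_{2k} = (−1)^k q^(k(k-1)) [2k]_q!/[2k]_q!!` and `h_{2k+1} = 0`. -/
noncomputable def qHermiteCoeff (q : ℝ) (m : ℕ) : ℝ :=
  if m % 2 = 0 then
    (-1 : ℝ) ^ (m / 2) * q ^ ((m / 2) * (m / 2 - 1)) * qFact q m / qEvenDFact q (m / 2)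
  else 0

/-- The q-Hermite polynomials `H_{n,q}(x) = Σ_{m=0}^n [n choose m]_q h_m x^(n-m)`. -/
noncomputable def qHermite (q : ℝ) (n : ℕ) : Polynomial ℝ :=
  ∑ m ∈ Finset.range (n + 1),
    Polynomial.C (qBinom q n m * qHermiteCoeff q m) * Polynomial.X ^ (n - m)

/-! The denominators in `H_{n,q}` are products of q-integers, which are positive for `q ≥ 0`, so
`H_{n,q}(x)` is continuous in `q` there and the one-sided limit is its value at `q = 1`. At `q = 1`
every q-integer is an ordinary integer, so `[n choose m]_1` is the binomial coefficient and
`h_{2k} = (-1)^k (2k)! / (2^k k!) = (-1)^k (2k-1)!!`: these are exactly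
the coefficients of `He_n`. -/

open scoped Nat

lemma qInt_one (n : ℕ) : qInt 1 n = n := by simp [qInt]

lemma qFact_one (n : ℕ) : qFact 1 n = n ! := by
  induction n with
  | zero => simp [qFact]
  | succ k ih => simp [qFact, ih, qInt_one, Nat.factorial_succ, mul_comm]

lemma qEvenDFact_one (n : ℕ) : qEvenDFact 1 n = 2 ^ n * n ! := by
  induction n with
  | zero => simp [qEvenDFact]
  | succ k ih =>
    simp only [qEvenDFact, ih, qInt_one, Nat.factorial_succ]
    push_cast
    ring

lemma qBinom_one {n m : ℕ} (h : m ≤ n) : qBinom 1 n m = n.choose m := by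
  rw [qBinom, qFact_one, qFact_one, qFact_one, Nat.cast_choose ℝ h]

lemma qHermiteCoeff_one_two_mul (k : ℕ) :
    qHermiteCoeff 1 (2 * k) = (-1) ^ k * (2 * k - 1)‼ := by
  have hk : 2 * k / 2 = k := by omega
  have hfact : ((2 * k)! : ℝ) = 2 ^ k * k ! * (2 * k - 1)‼ := by
    rcases k with _ | j
    · simp
    · rw [show 2 * (j + 1) = 2 * j + 1 + 1 by ring, Nat.factorial_eq_mul_doubleFactorial,
        ← show 2 * (j + 1) = 2 * j + 1 + 1 by ring, Nat.doubleFactorial_two_mul,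
        show 2 * (j + 1) - 1 = 2 * j + 1 by omega]
      push_cast
      ring
  rw [qHermiteCoeff, if_pos (by omega), hk, one_pow, mul_one, qFact_one, qEvenDFact_one, hfact]
  field_simp

lemma qHermiteCoeff_of_odd (q : ℝ) {m : ℕ} (hm : Odd m) : qHermiteCoeff q m = 0 := by
  rw [qHermiteCoeff, if_neg (Nat.odd_iff.mp hm ▸ one_ne_zero)]

lemma qBinom_one_mul_qHermiteCoeff_one {n m : ℕ} (h : m ≤ n) :
    qBinom 1 n m * qHermiteCoeff 1 m = (hermite n).coeff (n - m) := by
  rcases Nat.even_or_odd' m with ⟨k, rfl | rfl⟩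
  · obtain ⟨j, rfl⟩ : ∃ j, n = 2 * k + j := ⟨n - 2 * k, by omega⟩
    rw [qBinom_one h, qHermiteCoeff_one_two_mul, Nat.add_sub_cancel_left,
      coeff_hermite_explicit, Nat.choose_symm_add]
    push_cast
    ring
  · rw [qHermiteCoeff_of_odd _ (odd_two_mul_add_one k), mul_zero,
      coeff_hermite_of_odd_add (by rw [Nat.odd_iff]; omega), Int.cast_zero]

theorem qHermite_one (n : ℕ) : qHermite 1 n = (hermite n).map (algebraMap ℤ ℝ) := by
  have hdeg : ((hermite n).map (algebraMap ℤ ℝ)).natDegree < n + 1 :=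
    (natDegree_map_le.trans natDegree_hermite.le).trans_lt n.lt_succ_self
  rw [as_sum_range_C_mul_X_pow' _ hdeg, ← sum_range_reflect, qHermite]
  refine sum_congr rfl fun m hm => ?_
  have hmn : m ≤ n := Nat.lt_succ_iff.mp (mem_range.mp hm)
  rw [coeff_map, qBinom_one_mul_qHermiteCoeff_one hmn, Nat.add_sub_cancel]
  rfl

lemma continuous_qInt (n : ℕ) : Continuous fun q : ℝ => qInt q n :=
  continuous_finsetSum _ fun i _ => continuous_pow i

lemma one_le_qInt {q : ℝ} (hq : 0 ≤ q) {n : ℕ} (hn : 0 < n) : 1 ≤ qInt q n := by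
  obtain ⟨k, rfl⟩ := Nat.exists_eq_add_of_lt hn
  rw [qInt, zero_add, sum_range_succ']
  simpa using sum_nonneg fun i _ => pow_nonneg hq (i + 1)

lemma continuous_qFact (n : ℕ) : Continuous fun q : ℝ => qFact q n := by
  induction n with
  | zero => exact continuous_const
  | succ k ih => exact ih.mul (continuous_qInt (k + 1))

lemma qFact_pos {q : ℝ} (hq : 0 ≤ q) (n : ℕ) : 0 < qFact q n := by
  induction n with
  | zero => exact one_pos
  | succ k ih => exact mul_pos ih (one_pos.trans_le (one_le_qInt hq k.succ_pos))

lemma continuous_qEvenDFact (n : ℕ) : Continuous fun q : ℝ => qEvenDFact q n := by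
  induction n with
  | zero => exact continuous_const
  | succ k ih => exact (continuous_qInt _).mul ih

lemma qEvenDFact_pos {q : ℝ} (hq : 0 ≤ q) (n : ℕ) : 0 < qEvenDFact q n := by
  induction n with
  | zero => exact one_pos
  | succ k ih => exact mul_pos (one_pos.trans_le (one_le_qInt hq (by omega))) ih

lemma continuousAt_qBinom {q₀ : ℝ} (hq₀ : 0 ≤ q₀) (n m : ℕ) :
    ContinuousAt (fun q : ℝ => qBinom q n m) q₀ :=
  (continuous_qFact n).continuousAt.div
    ((continuous_qFact m).mul (continuous_qFact (n - m))).continuousAt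
    (mul_pos (qFact_pos hq₀ m) (qFact_pos hq₀ (n - m))).ne'

lemma continuousAt_qHermiteCoeff {q₀ : ℝ} (hq₀ : 0 ≤ q₀) (m : ℕ) :
    ContinuousAt (fun q : ℝ => qHermiteCoeff q m) q₀ := by
  unfold qHermiteCoeff
  split_ifs
  · exact ((continuous_const.mul (continuous_pow _)).mul (continuous_qFact m)).continuousAt.div
      (continuous_qEvenDFact _).continuousAt (qEvenDFact_pos hq₀ _).ne'
  · exact continuousAt_const

lemma continuousAt_eval_qHermite {q₀ : ℝ} (hq₀ : 0 ≤ q₀) (n : ℕ) (x : ℝ) :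
    ContinuousAt (fun q : ℝ => (qHermite q n).eval x) q₀ := by
  simp only [qHermite, eval_finsetSum, eval_mul, eval_C, eval_pow, eval_X]
  exact tendsto_finsetSum _ fun m _ =>
    ((continuousAt_qBinom hq₀ n m).mul (continuousAt_qHermiteCoeff hq₀ m)).mul
      continuousAt_const

/-- As q → 1⁻, the q-Hermite polynomial H_{n,q}(x) tends to the n-th probabilists'
Hermite polynomial He_n(x). -/
theorem qHermite_tendsto_hermite (n : ℕ) (x : ℝ) :
    Filter.Tendsto (fun q : ℝ => (qHermite q n).eval x)
      (nhdsWithin 1 (Set.Iio 1))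
      (nhds (Polynomial.aeval x (Polynomial.hermite n))) := by
  rw [aeval_def, ← eval_map, ← qHermite_one]
  exact (continuousAt_eval_qHermite zero_le_one n x).continuousWithinAt.tendsto
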